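/- Let X = X₁ × ⋯ × X_n with |X_i| ≥ 2, let 1 ≤ k ≤ n, let A ∈ ℝ^{a×X} be a matrix whose rows span V_k(X), and let Y be a finite nonempty set. If X contains |Y| pairwise disjoint radius-k Hamming balls, then the maximum over all families of vectors (v_y)_{y∈Y} in ℝ^a of ∑_{y∈Y} rank(A_{C_y}), where (C_y)_{y∈Y} is the induced slicing, equals |Y| · (1 + ∑_{λ∈Λ_k∖{∅}} ∏_{i∈λ}(|X_i|−1)). -/

import Mathlib

open scoped Classical BigOperators

/-- `V_k(X)`: the span of all functions on `X = ∏ i, X_i` depending on at most `k`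
coordinates. -/
noncomputable def Vk (n : ℕ) (q : Fin n → ℕ) (k : ℕ) :
    Submodule ℝ ((∀ i, Fin (q i)) → ℝ) :=
  Submodule.span ℝ
    {f : (∀ i, Fin (q i)) → ℝ | ∃ s : Finset (Fin n), s.card ≤ k ∧
      ∀ x x' : ∀ i, Fin (q i), (∀ i ∈ s, x i = x' i) → f x = f x'}

/-- The rank of the submatrix `A_C` of columns of `A` indexed by `C` (the dimension of
the span of those columns). -/
noncomputable def colRank {m X : Type*} [Fintype m] (A : Matrix m X ℝ) (C : Set X) : ℕ :=
  Module.finrank ℝ (Submodule.span ℝ ((fun x => fun i => A i x) '' C))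

/-- The slicing induced by a family of vectors `(v_y)`:
`C_y = {x : ⟨A_x, v_y⟩ > ⟨A_x, v_{y'}⟩ for all y' ≠ y}`. -/
def sliceSet {a : ℕ} {X Y : Type*} [Fintype (Fin a)] (A : Matrix (Fin a) X ℝ)
    (v : Y → Fin a → ℝ) (y : Y) : Set X :=
  {x | ∀ y', y' ≠ y → ∑ i, A i x * v y' i < ∑ i, A i x * v y i}

/-!
For a centre `c`, the functions `x ↦ ∏_{i : b i ≠ c i} [x i = b i]`, indexed by the points `b`
of the radius-`k` Hamming ball around `c`, span `V_k(X)`: a cylinder indicator on `≤ k`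
coordinates is reduced to them by repeatedly writing `[x i = c i] = 1 - ∑_{v ≠ c i} [x i = v]`.
Their restrictions to any set `C` containing the ball are linearly independent, since evaluating
at the points of the ball gives a unitriangular system for the order by distance to `c`. Hence
`rank A_C ≤ dim V_k = |ball| = 1 + ∑_{λ ∈ Λ_k ∖ {∅}} ∏_{i ∈ λ} (|X_i| - 1)` for every `C`, with
equality as soon as `C` contains a radius-`k` ball. For `k ≥ 1` the function `x ↦ -d_H(x, c_y)`
lies in `V_k`, so some `v_y` has `⟨A_x, v_y⟩ = -d_H(x, c_y)`; since the balls are disjoint, each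
slice `C_y` then contains the ball around `c_y`.
-/

open Finset Function

namespace KInteraction

section Cylinder

variable {ι : Type*} {β : ι → Type*} [∀ i, DecidableEq (β i)]

def cylinderIndicator (t : Finset ι) (b x : ∀ i, β i) : ℝ :=
  ∏ i ∈ t, if x i = b i then 1 else 0

lemma cylinderIndicator_apply (t : Finset ι) (b x : ∀ i, β i) :
    cylinderIndicator t b x = if ∀ i ∈ t, x i = b i then 1 else 0 :=
  prod_boole

lemma cylinderIndicator_self (t : Finset ι) (b : ∀ i, β i) : cylinderIndicator t b b = 1 :=
  prod_eq_one fun _ _ => if_pos rfl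

lemma cylinderIndicator_congr {t : Finset ι} {b b' : ∀ i, β i} (h : ∀ i ∈ t, b i = b' i) :
    cylinderIndicator t b = cylinderIndicator t b' :=
  funext fun _ => prod_congr rfl fun i hi => by rw [h i hi]

lemma cylinderIndicator_erase [DecidableEq ι] {t : Finset ι} {i : ι} [Fintype (β i)]
    (hi : i ∈ t) (b : ∀ i, β i) :
    cylinderIndicator (t.erase i) b = ∑ v, cylinderIndicator t (update b i v) := by
  funext x
  have factor : ∀ v, cylinderIndicator t (update b i v) x =
      cylinderIndicator (t.erase i) b x * if x i = v then 1 else 0 := fun v => by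
    rw [cylinderIndicator, ← prod_erase_mul t _ hi, update_self]
    congr 1
    exact prod_congr rfl fun j hj => by rw [update_of_ne (ne_of_mem_erase hj)]
  simp only [Finset.sum_apply, factor, ← mul_sum, sum_ite_eq, mem_univ, if_true, mul_one]

variable [Fintype ι]

def centeredIndicator (c b : ∀ i, β i) : (∀ i, β i) → ℝ :=
  cylinderIndicator {i | b i ≠ c i} b

lemma centeredIndicator_apply_eq_zero {c b b' : ∀ i, β i} (hne : b' ≠ b)
    (hd : hammingDist b c ≤ hammingDist b' c) : centeredIndicator c b' b = 0 := by
  rw [centeredIndicator, cylinderIndicator_apply, if_neg]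
  intro hagree
  simp only [mem_filter, mem_univ, true_and] at hagree
  have hsub : ({i | b' i ≠ c i} : Finset ι) ⊆ ({i | b i ≠ c i} : Finset ι) := fun i hi => by
    simp only [mem_filter, mem_univ, true_and] at hi ⊢
    rwa [hagree i hi]
  have hsupp := eq_of_subset_of_card_le hsub hd
  refine hne (funext fun i => ?_)
  by_cases hi : b' i = c i
  · have : i ∉ ({i | b i ≠ c i} : Finset ι) := by rw [← hsupp]; simp [hi]
    simp only [mem_filter, mem_univ, true_and, not_not] at this
    rw [hi, this]
  · exact (hagree i hi).symm

variable [DecidableEq ι] [∀ i, Fintype (β i)]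

theorem linearIndependent_restrict_centeredIndicator (c : ∀ i, β i) (k : ℕ)
    {C : Set (∀ i, β i)} (hC : ∀ x, hammingDist x c ≤ k → x ∈ C) :
    LinearIndependent ℝ
      (fun b : {b // hammingDist b c ≤ k} => fun x : C => centeredIndicator c b x) := by
  rw [Fintype.linearIndependent_iff]
  intro g hg
  by_contra! hg_ne
  obtain ⟨b, hb, hmin⟩ := (univ.filter (g · ≠ 0)).exists_min_image (fun b => hammingDist b.1 c)
    (by simpa [Finset.filter_nonempty_iff] using hg_ne)
  have heval := congrFun hg ⟨b, hC _ b.2⟩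
  simp only [Finset.sum_apply, Pi.smul_apply, smul_eq_mul, Pi.zero_apply] at heval
  rw [sum_eq_single b, centeredIndicator, cylinderIndicator_self, mul_one] at heval
  · exact (mem_filter.mp hb).2 heval
  · intro b' _ hne
    by_cases hgb' : g b' = 0
    · rw [hgb', zero_mul]
    · rw [centeredIndicator_apply_eq_zero (Subtype.coe_ne_coe.mpr hne)
        (hmin b' (mem_filter.mpr ⟨mem_univ _, hgb'⟩)), mul_zero]
  · exact fun h => absurd (mem_univ b) h

lemma card_filter_filter_ne_eq (c : ∀ i, β i) (t : Finset ι) :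
    #{b : ∀ i, β i | ({i | b i ≠ c i} : Finset ι) = t} = ∏ i ∈ t, (Fintype.card (β i) - 1) := by
  have : ({b : ∀ i, β i | ({i | b i ≠ c i} : Finset ι) = t} : Finset _) =
      Fintype.piFinset fun i => if i ∈ t then univ.erase (c i) else {c i} := by
    ext b
    simp only [mem_filter, mem_univ, true_and, Fintype.mem_piFinset, Finset.ext_iff]
    refine forall_congr' fun i => ?_
    split_ifs with hi <;> simp [hi]
  rw [this, Fintype.card_piFinset]
  simp only [apply_ite Finset.card, card_erase_of_mem (mem_univ _), card_univ, card_singleton]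
  rw [prod_ite_mem, univ_inter]

theorem card_hammingBall (c : ∀ i, β i) (k : ℕ) :
    Fintype.card {b // hammingDist b c ≤ k} =
      ∑ t ∈ univ.filter (fun t : Finset ι => t.card ≤ k), ∏ i ∈ t, (Fintype.card (β i) - 1) := by
  rw [Fintype.card_subtype, card_eq_sum_card_fiberwise
    (f := fun b : ∀ i, β i => ({i | b i ≠ c i} : Finset ι))
    (t := univ.filter (fun t : Finset ι => t.card ≤ k))
    (fun b hb => by simpa [hammingDist] using hb)]
  refine sum_congr rfl fun t ht => ?_
  rw [← card_filter_filter_ne_eq c t, filter_filter]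
  congr 1
  refine filter_congr fun b _ => and_iff_right_of_imp fun h => ?_
  simpa [hammingDist, h] using ht

theorem cylinderIndicator_mem_span_centeredIndicator (c : ∀ i, β i) {k : ℕ} {t : Finset ι}
    (ht : #t ≤ k) (b : ∀ i, β i) :
    cylinderIndicator t b ∈ Submodule.span ℝ
      (Set.range fun b : {b // hammingDist b c ≤ k} => centeredIndicator c b) := by
  induction hm : #{i ∈ t | b i = c i} using Nat.strong_induction_on generalizing t b with
  | _ m ih =>
  rcases (t.filter fun i => b i = c i).eq_empty_or_nonempty with hagree | ⟨i, hi⟩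
  · have hsupp : ({j | t.piecewise b c j ≠ c j} : Finset ι) = t := by
      ext j
      by_cases hj : j ∈ t
      · have : b j ≠ c j := fun h => (eq_empty_iff_forall_notMem.mp hagree) j (by simp [hj, h])
        simp [hj, this]
      · simp [hj]
    refine Submodule.subset_span ⟨⟨t.piecewise b c, by rw [hammingDist, hsupp]; exact ht⟩, ?_⟩
    change cylinderIndicator {j | t.piecewise b c j ≠ c j} (t.piecewise b c) = _
    rw [hsupp]
    exact cylinderIndicator_congr fun j hj => piecewise_eq_of_mem _ _ _ hj
  · obtain ⟨hit, hic⟩ := mem_filter.mp hi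
    -- `[x i = c i] = 1 - ∑_{v ≠ c i} [x i = v]` trades an agreement with `c` for disagreements.
    have hsplit : cylinderIndicator t b = cylinderIndicator (t.erase i) b -
        ∑ v ∈ univ.erase (c i), cylinderIndicator t (update b i v) := by
      rw [cylinderIndicator_erase hit, ← add_sum_erase _ _ (mem_univ (c i)), ← hic,
        update_eq_self, add_sub_cancel_right]
    rw [hsplit]
    refine Submodule.sub_mem _ (ih _ ?_ (card_erase_le.trans ht) b rfl)
      (Submodule.sum_mem _ fun v hv => ih _ ?_ ht _ rfl)
    · rw [← hm, filter_erase]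
      exact card_erase_lt_of_mem hi
    · rw [← hm]
      refine (card_le_card fun j hj => ?_).trans_lt (card_erase_lt_of_mem hi)
      obtain ⟨hjt, hjc⟩ := mem_filter.mp hj
      have hji : j ≠ i := by
        rintro rfl
        rw [update_self] at hjc
        exact (ne_of_mem_erase hv) hjc
      rw [update_of_ne hji] at hjc
      exact mem_erase.mpr ⟨hji, mem_filter.mpr ⟨hjt, hjc⟩⟩

lemma sum_smul_cylinderIndicator_piecewise {s : Finset ι} {f : (∀ i, β i) → ℝ}
    (hf : ∀ x x', (∀ i ∈ s, x i = x' i) → f x = f x') (c : ∀ i, β i) :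
    ∑ b ∈ univ.image fun x : (∀ i, β i) => s.piecewise x c, f b • cylinderIndicator s b = f := by
  funext x
  simp only [Finset.sum_apply, Pi.smul_apply, smul_eq_mul]
  have hagree : ∀ i ∈ s, x i = s.piecewise x c i := fun i hi => (piecewise_eq_of_mem _ _ _ hi).symm
  rw [sum_eq_single (s.piecewise x c), cylinderIndicator_apply, if_pos hagree, mul_one,
    hf _ _ fun i hi => (hagree i hi).symm]
  · rintro _ hb hne
    obtain ⟨y, -, rfl⟩ := mem_image.mp hb
    rw [cylinderIndicator_apply, if_neg, mul_zero]
    refine fun hxy => hne (funext fun i => ?_)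
    by_cases hi : i ∈ s <;> simp [hi, hxy i]
  · exact fun h => absurd (mem_image_of_mem _ (mem_univ x)) h

end Cylinder

section ColumnRank

variable {m X : Type*} [Fintype m]

lemma colRank_eq_finrank_map_span_range [Finite X] (A : Matrix m X ℝ) (C : Set X) :
    colRank A C = Module.finrank ℝ
      ((Submodule.span ℝ (Set.range A)).map (LinearMap.funLeft ℝ ℝ ((↑) : C → X))) := by
  have : Fintype C := Fintype.ofFinite C
  let B : Matrix m C ℝ := fun i x => A i x
  calc colRank A C = B.rank := by
        rw [Matrix.rank_eq_finrank_span_cols, colRank, Set.image_eq_range]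
        rfl
    _ = _ := by
        rw [Matrix.rank_eq_finrank_span_row, Submodule.map_span,
          show Set.range B.row = _ from Set.range_comp (LinearMap.funLeft ℝ ℝ ((↑) : C → X)) A]

lemma colRank_le_finrank_span_range [Finite X] (A : Matrix m X ℝ) (C : Set X) :
    colRank A C ≤ Module.finrank ℝ (Submodule.span ℝ (Set.range A)) := by
  rw [colRank_eq_finrank_map_span_range]
  exact Submodule.finrank_map_le _ _

lemma card_le_colRank [Finite X] {ι : Type*} [Fintype ι] {A : Matrix m X ℝ} {C : Set X}
    {f : ι → X → ℝ} (hf : ∀ i, f i ∈ Submodule.span ℝ (Set.range A))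
    (hli : LinearIndependent ℝ fun i (x : C) => f i x) : Fintype.card ι ≤ colRank A C := by
  rw [colRank_eq_finrank_map_span_range, ← finrank_span_eq_card hli]
  exact Submodule.finrank_mono (Submodule.span_le.mpr
    (Set.range_subset_iff.mpr fun i => Submodule.mem_map_of_mem (hf i)))

lemma exists_weights_of_mem_span_range {A : Matrix m X ℝ} {f : X → ℝ}
    (hf : f ∈ Submodule.span ℝ (Set.range A)) : ∃ w : m → ℝ, ∀ x, ∑ i, A i x * w i = f x := by
  obtain ⟨w, rfl⟩ := (Submodule.mem_span_range_iff_exists_fun ℝ).mp hf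
  exact ⟨w, fun x => by simp [Finset.sum_apply, mul_comm]⟩

end ColumnRank

lemma hammingBall_subset_sliceSet {ι : Type*} [Fintype ι] {β : ι → Type*}
    [∀ i, DecidableEq (β i)] {a : ℕ} {Y : Type*} {A : Matrix (Fin a) (∀ i, β i) ℝ}
    {w : Y → Fin a → ℝ} {c : Y → ∀ i, β i} {k : ℕ}
    (hw : ∀ y x, ∑ i, A i x * w y i = -(hammingDist x (c y) : ℝ))
    (hdisj : ∀ y y', y ≠ y' → ∀ x, ¬(hammingDist x (c y) ≤ k ∧ hammingDist x (c y') ≤ k))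
    (y : Y) {x : ∀ i, β i} (hx : hammingDist x (c y) ≤ k) : x ∈ sliceSet A w y := by
  intro y' hy'
  have hfar : k < hammingDist x (c y') := lt_of_not_ge fun h => hdisj y y' hy'.symm x ⟨hx, h⟩
  rw [hw, hw, neg_lt_neg_iff, Nat.cast_lt]
  omega

section HierarchicalModel

variable {n : ℕ} {q : Fin n → ℕ} {k a : ℕ} {A : Matrix (Fin a) (∀ i, Fin (q i)) ℝ}

lemma cylinderIndicator_mem_Vk {t : Finset (Fin n)} (ht : #t ≤ k) (b : ∀ i, Fin (q i)) :
    cylinderIndicator t b ∈ Vk n q k :=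
  Submodule.subset_span ⟨t, ht, fun _ _ h => prod_congr rfl fun i hi => by rw [h i hi]⟩

theorem Vk_le_span_centeredIndicator (c : ∀ i, Fin (q i)) :
    Vk n q k ≤ Submodule.span ℝ
      (Set.range fun b : {b // hammingDist b c ≤ k} => centeredIndicator c b) := by
  rw [Vk, Submodule.span_le]
  rintro f ⟨s, hs, hf⟩
  rw [← sum_smul_cylinderIndicator_piecewise hf c]
  exact Submodule.sum_mem _ fun b _ =>
    Submodule.smul_mem _ _ (cylinderIndicator_mem_span_centeredIndicator c hs b)

lemma hammingDist_mem_Vk (hk : 1 ≤ k) (c : ∀ i, Fin (q i)) :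
    (fun x => (hammingDist x c : ℝ)) ∈ Vk n q k := by
  have hsum : (fun x => (hammingDist x c : ℝ)) = ∑ j, fun x => if x j = c j then 0 else 1 := by
    funext x
    simp [hammingDist, Finset.sum_apply, sum_ite, Finset.filter_not]
  rw [hsum]
  refine Submodule.sum_mem _ fun j _ => Submodule.subset_span ⟨{j}, by simpa using hk, ?_⟩
  intro x x' h
  simp only [h j (mem_singleton_self j)]

lemma card_hammingBall_fin (c : ∀ i, Fin (q i)) :
    Fintype.card {b // hammingDist b c ≤ k} =
      1 + ∑ t ∈ univ.filter (fun t : Finset (Fin n) => t.Nonempty ∧ t.card ≤ k),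
        ∏ i ∈ t, (q i - 1) := by
  have hsplit : univ.filter (fun t : Finset (Fin n) => t.card ≤ k) =
      insert ∅ (univ.filter fun t : Finset (Fin n) => t.Nonempty ∧ t.card ≤ k) := by
    ext t
    rcases t.eq_empty_or_nonempty with rfl | ht
    · simp
    · simp [ht, ht.ne_empty]
  rw [card_hammingBall, hsplit, sum_insert (by simp), prod_empty]
  simp only [Fintype.card_fin]

theorem colRank_le_card_hammingBall (hA : Submodule.span ℝ (Set.range A) = Vk n q k)
    (c : ∀ i, Fin (q i)) (C : Set (∀ i, Fin (q i))) :
    colRank A C ≤ Fintype.card {b // hammingDist b c ≤ k} := by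
  refine (colRank_le_finrank_span_range A C).trans ?_
  rw [hA]
  exact (Submodule.finrank_mono (Vk_le_span_centeredIndicator c)).trans (finrank_range_le_card _)

theorem card_hammingBall_le_colRank (hA : Submodule.span ℝ (Set.range A) = Vk n q k)
    (c : ∀ i, Fin (q i)) {C : Set (∀ i, Fin (q i))} (hC : ∀ x, hammingDist x c ≤ k → x ∈ C) :
    Fintype.card {b // hammingDist b c ≤ k} ≤ colRank A C :=
  card_le_colRank (fun b => hA ▸ cylinderIndicator_mem_Vk b.2 b.1)
    (linearIndependent_restrict_centeredIndicator c k hC)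

end HierarchicalModel

end KInteraction

open KInteraction in
theorem tropical_mixture_k_interaction_disjoint_balls_general
    (n : ℕ) (q : Fin n → ℕ)
    (k : ℕ) (hk1 : 1 ≤ k)
    (a : ℕ) (A : Matrix (Fin a) (∀ i, Fin (q i)) ℝ)
    (hA : Submodule.span ℝ (Set.range A) = Vk n q k)
    {Y : Type*} [Fintype Y]
    (c : Y → ∀ i, Fin (q i))
    (hdisj : ∀ y y', y ≠ y' →
      ∀ x, ¬(hammingDist x (c y) ≤ k ∧ hammingDist x (c y') ≤ k)) :
    IsGreatest {s : ℕ | ∃ v : Y → Fin a → ℝ, s = ∑ y : Y, colRank A (sliceSet A v y)}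
      (Fintype.card Y *
        (1 + ∑ t ∈ Finset.univ.filter
            (fun t : Finset (Fin n) => t.Nonempty ∧ t.card ≤ k),
          ∏ i ∈ t, (q i - 1))) := by
  set D := 1 + ∑ t ∈ univ.filter (fun t : Finset (Fin n) => t.Nonempty ∧ t.card ≤ k),
    ∏ i ∈ t, (q i - 1)
  have hball (y : Y) : Fintype.card {b // hammingDist b (c y) ≤ k} = D := card_hammingBall_fin (c y)
  have hrank_le (y : Y) (C : Set (∀ i, Fin (q i))) : colRank A C ≤ D :=
    (colRank_le_card_hammingBall hA (c y) C).trans_eq (hball y)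
  obtain ⟨w, hw⟩ : ∃ w : Y → Fin a → ℝ,
      ∀ y x, ∑ i, A i x * w y i = -(hammingDist x (c y) : ℝ) := by
    choose w hw using fun y =>
      exists_weights_of_mem_span_range (hA ▸ neg_mem (hammingDist_mem_Vk hk1 (c y)))
    exact ⟨w, hw⟩
  refine ⟨⟨w, ?_⟩, ?_⟩
  · rw [← card_univ, ← smul_eq_mul, ← sum_const]
    refine sum_congr rfl fun y _ => (le_antisymm (hrank_le y _) ?_).symm
    rw [← hball y]
    exact card_hammingBall_le_colRank hA (c y) fun x hx => hammingBall_subset_sliceSet hw hdisj y hx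
  · rintro _ ⟨v, rfl⟩
    calc ∑ y, colRank A (sliceSet A v y) ≤ ∑ _y : Y, D :=
          sum_le_sum fun y _ => hrank_le y _
      _ = Fintype.card Y * D := by rw [sum_const, card_univ, smul_eq_mul]

/-- If the rows of `A` span `V_k(X)` and `X` contains `|Y|` pairwise
disjoint radius-`k` Hamming balls, then the maximum over all families `(v_y)_{y∈Y}` of
`∑_y rank(A_{C_y})`, with `(C_y)` the induced slicing, equals
`|Y|·(1 + ∑_{λ∈Λ_k∖{∅}} ∏_{i∈λ}(|X_i|−1))`. -/
theorem tropical_mixture_k_interaction_disjoint_balls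
    (n : ℕ) (q : Fin n → ℕ) (hq : ∀ i, 2 ≤ q i)
    (k : ℕ) (hk1 : 1 ≤ k) (hkn : k ≤ n)
    (a : ℕ) (A : Matrix (Fin a) (∀ i, Fin (q i)) ℝ)
    (hA : Submodule.span ℝ (Set.range A) = Vk n q k)
    {Y : Type*} [Fintype Y] [Nonempty Y]
    (c : Y → ∀ i, Fin (q i))
    (hdisj : ∀ y y', y ≠ y' →
      ∀ x, ¬(hammingDist x (c y) ≤ k ∧ hammingDist x (c y') ≤ k)) :
    IsGreatest {s : ℕ | ∃ v : Y → Fin a → ℝ, s = ∑ y : Y, colRank A (sliceSet A v y)}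
      (Fintype.card Y *
        (1 + ∑ t ∈ Finset.univ.filter
            (fun t : Finset (Fin n) => t.Nonempty ∧ t.card ≤ k),
          ∏ i ∈ t, (q i - 1))) :=
  tropical_mixture_k_interaction_disjoint_balls_general n q k hk1 a A hA c hdisj
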